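/- arXiv:2502.16237 — 5 statements merged into one kernel-verified Lean document; each statement's English description precedes it below -/
import Mathlib

section
/- If v is a smooth solution of the modified KdV equation v_t - 6v²v_x + v_xxx = 0, then u := v² + v_x solves the KdV equation u_t - 6uu_x + u_xxx = 0. More precisely, u_t - 6uu_x + u_xxx = (2v + ∂_x)(v_t - 6v²v_x + v_xxx). -/
noncomputable def px (f : ℝ × ℝ → ℝ) (p : ℝ × ℝ) : ℝ := fderiv ℝ f p (1, 0)
noncomputable def pt (f : ℝ × ℝ → ℝ) (p : ℝ × ℝ) : ℝ := fderiv ℝ f p (0, 1)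

lemma px_contDiff {f : ℝ × ℝ → ℝ} (hf : ContDiff ℝ (⊤ : ℕ∞) f) : ContDiff ℝ (⊤ : ℕ∞) (px f) :=
  (hf.fderiv_right (by simp)).clm_apply contDiff_const

lemma pt_contDiff {f : ℝ × ℝ → ℝ} (hf : ContDiff ℝ (⊤ : ℕ∞) f) : ContDiff ℝ (⊤ : ℕ∞) (pt f) :=
  (hf.fderiv_right (by simp)).clm_apply contDiff_const

lemma deriv_x {f : ℝ × ℝ → ℝ} (hf : ContDiff ℝ (⊤ : ℕ∞) f) (x t : ℝ) :
    deriv (fun x' => f (x', t)) x = px f (x, t) := by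
  have h1 : HasFDerivAt f (fderiv ℝ f (x, t)) (x, t) :=
    (hf.differentiable (by simp) (x, t)).hasFDerivAt
  have h2 : HasDerivAt (fun x' : ℝ => ((x', t) : ℝ × ℝ)) (1, 0) x :=
    (hasDerivAt_id x).prodMk (hasDerivAt_const x t)
  have := (h1.comp_hasDerivAt x h2).deriv
  simpa [px, Function.comp_def] using this

lemma deriv_t {f : ℝ × ℝ → ℝ} (hf : ContDiff ℝ (⊤ : ℕ∞) f) (x t : ℝ) :
    deriv (fun t' => f (x, t')) t = pt f (x, t) := by
  have h1 : HasFDerivAt f (fderiv ℝ f (x, t)) (x, t) :=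
    (hf.differentiable (by simp) (x, t)).hasFDerivAt
  have h2 : HasDerivAt (fun t' : ℝ => ((x, t') : ℝ × ℝ)) (0, 1) t :=
    (hasDerivAt_const t x).prodMk (hasDerivAt_id t)
  have := (h1.comp_hasDerivAt t h2).deriv
  simpa [px, pt, Function.comp_def] using this

lemma clairaut {f : ℝ × ℝ → ℝ} (hf : ContDiff ℝ (⊤ : ℕ∞) f) (p : ℝ × ℝ) :
    pt (px f) p = px (pt f) p := by
  have hd : ∀ q, HasFDerivAt f (fderiv ℝ f q) q := fun q =>
    (hf.differentiable (by simp) q).hasFDerivAt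
  have hdd : HasFDerivAt (fderiv ℝ f) (fderiv ℝ (fderiv ℝ f) p) p :=
    ((hf.fderiv_right (by simp)).differentiable (n := (⊤ : ℕ∞)) (by simp) p).hasFDerivAt
  have hsym := second_derivative_symmetric hd hdd
  have h1 : pt (px f) p = fderiv ℝ (fderiv ℝ f) p (0, 1) (1, 0) := by
    have h : HasFDerivAt (fun q => fderiv ℝ f q ((1:ℝ), (0:ℝ)))
        ((ContinuousLinearMap.apply ℝ ℝ ((1:ℝ), (0:ℝ))).comp (fderiv ℝ (fderiv ℝ f) p)) p :=
      (ContinuousLinearMap.apply ℝ ℝ ((1:ℝ), (0:ℝ))).hasFDerivAt.comp p hdd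
    have e : px f = fun q => fderiv ℝ f q ((1:ℝ), (0:ℝ)) := rfl
    simp only [pt, e, h.fderiv]
    simp
  have h2 : px (pt f) p = fderiv ℝ (fderiv ℝ f) p (1, 0) (0, 1) := by
    have h : HasFDerivAt (fun q => fderiv ℝ f q ((0:ℝ), (1:ℝ)))
        ((ContinuousLinearMap.apply ℝ ℝ ((0:ℝ), (1:ℝ))).comp (fderiv ℝ (fderiv ℝ f) p)) p :=
      (ContinuousLinearMap.apply ℝ ℝ ((0:ℝ), (1:ℝ))).hasFDerivAt.comp p hdd
    have e : pt f = fun q => fderiv ℝ f q ((0:ℝ), (1:ℝ)) := rfl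
    simp only [px, e, h.fderiv]
    simp
  rw [h1, h2, hsym]

lemma px_add {f g : ℝ × ℝ → ℝ} {p : ℝ × ℝ} (hf : DifferentiableAt ℝ f p)
    (hg : DifferentiableAt ℝ g p) :
    px (fun q => f q + g q) p = px f p + px g p := by
  simp [px, fderiv_fun_add hf hg]

lemma px_sub {f g : ℝ × ℝ → ℝ} {p : ℝ × ℝ} (hf : DifferentiableAt ℝ f p)
    (hg : DifferentiableAt ℝ g p) :
    px (fun q => f q - g q) p = px f p - px g p := by
  simp [px, fderiv_fun_sub hf hg]

lemma px_mul {f g : ℝ × ℝ → ℝ} {p : ℝ × ℝ} (hf : DifferentiableAt ℝ f p)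
    (hg : DifferentiableAt ℝ g p) :
    px (fun q => f q * g q) p = px f p * g p + f p * px g p := by
  simp [px, fderiv_fun_mul hf hg]; ring

lemma px_const_mul {f : ℝ × ℝ → ℝ} {p : ℝ × ℝ} (c : ℝ) (hf : DifferentiableAt ℝ f p) :
    px (fun q => c * f q) p = c * px f p := by
  simp [px, fderiv_const_mul hf c]

lemma px_sq {f : ℝ × ℝ → ℝ} {p : ℝ × ℝ} (hf : DifferentiableAt ℝ f p) :
    px (fun q => f q ^ 2) p = 2 * f p * px f p := by
  have : (fun q => f q ^ 2) = fun q => f q * f q := by funext q; ring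
  rw [this, px_mul hf hf]; ring

lemma pt_add {f g : ℝ × ℝ → ℝ} {p : ℝ × ℝ} (hf : DifferentiableAt ℝ f p)
    (hg : DifferentiableAt ℝ g p) :
    pt (fun q => f q + g q) p = pt f p + pt g p := by
  simp [pt, fderiv_fun_add hf hg]

lemma pt_sq {f : ℝ × ℝ → ℝ} {p : ℝ × ℝ} (hf : DifferentiableAt ℝ f p) :
    pt (fun q => f q ^ 2) p = 2 * f p * pt f p := by
  have : (fun q => f q ^ 2) = fun q => f q * f q := by funext q; ring
  rw [this]; simp [pt, fderiv_fun_mul hf hf]; ring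

lemma key (V : ℝ × ℝ → ℝ) (hV : ContDiff ℝ (⊤ : ℕ∞) V) (p : ℝ × ℝ) :
    pt (fun q => V q ^ 2 + px V q) p
      - 6 * (V p ^ 2 + px V p) * px (fun q => V q ^ 2 + px V q) p
      + px (px (px (fun q => V q ^ 2 + px V q))) p
    = 2 * V p * (pt V p - 6 * V p ^ 2 * px V p + px (px (px V)) p)
      + px (fun q => pt V q - 6 * V q ^ 2 * px V q + px (px (px V)) q) p := by
  have h1 : ContDiff ℝ (⊤ : ℕ∞) (px V) := px_contDiff hV
  have h2 : ContDiff ℝ (⊤ : ℕ∞) (px (px V)) := px_contDiff h1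
  have h3 : ContDiff ℝ (⊤ : ℕ∞) (px (px (px V))) := px_contDiff h2
  have hw : ContDiff ℝ (⊤ : ℕ∞) (pt V) := pt_contDiff hV
  have dV : ∀ q, DifferentiableAt ℝ V q := fun q => (hV.differentiable (by simp) q)
  have d1 : ∀ q, DifferentiableAt ℝ (px V) q := fun q => (h1.differentiable (by simp) q)
  have d2 : ∀ q, DifferentiableAt ℝ (px (px V)) q := fun q => (h2.differentiable (by simp) q)
  have d3 : ∀ q, DifferentiableAt ℝ (px (px (px V))) q := fun q => (h3.differentiable (by simp) q)
  have dw : ∀ q, DifferentiableAt ℝ (pt V) q := fun q => (hw.differentiable (by simp) q)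
  -- first x derivative of U
  have hU1 : px (fun q => V q ^ 2 + px V q) = fun q => 2 * (V q * px V q) + px (px V) q := by
    funext q
    rw [px_add ((dV q).fun_pow 2) (d1 q), px_sq (dV q)]; ring
  -- second x derivative of U
  have hU2 : px (px (fun q => V q ^ 2 + px V q))
      = fun q => 2 * (px V q * px V q + V q * px (px V) q) + px (px (px V)) q := by
    rw [hU1]; funext q
    rw [px_add (by fun_prop) (d2 q), px_const_mul 2 (by fun_prop), px_mul (dV q) (d1 q)]
  -- third x derivative of U
  have hU3 : px (px (px (fun q => V q ^ 2 + px V q))) p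
      = 2 * (px (px V) p * px V p + px V p * px (px V) p
          + (px V p * px (px V) p + V p * px (px (px V)) p)) + px (px (px (px V))) p := by
    rw [hU2]
    have a1 : DifferentiableAt ℝ (fun q => px V q * px V q) p := (d1 p).mul (d1 p)
    have a2 : DifferentiableAt ℝ (fun q => V q * px (px V) q) p := (dV p).mul (d2 p)
    have a3 : DifferentiableAt ℝ (fun q => px V q * px V q + V q * px (px V) q) p := a1.add a2
    have a4 : DifferentiableAt ℝ (fun q => 2 * (px V q * px V q + V q * px (px V) q)) p :=
      a3.const_mul 2
    rw [px_add a4 (d3 p), px_const_mul 2 a3, px_add a1 a2,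
      px_mul (d1 p) (d1 p), px_mul (dV p) (d2 p)]
  -- t derivative of U, using Clairaut
  have hUt : pt (fun q => V q ^ 2 + px V q) p = 2 * V p * pt V p + px (pt V) p := by
    rw [pt_add ((dV p).fun_pow 2) (d1 p), pt_sq (dV p), clairaut hV p]
  -- x derivative of F
  have hF : px (fun q => pt V q - 6 * V q ^ 2 * px V q + px (px (px V)) q) p
      = px (pt V) p - 6 * (2 * V p * px V p * px V p + V p ^ 2 * px (px V) p)
        + px (px (px (px V))) p := by
    have e : (fun q => pt V q - 6 * V q ^ 2 * px V q + px (px (px V)) q)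
        = fun q => (pt V q - 6 * (V q ^ 2 * px V q)) + px (px (px V)) q := by
      funext q; ring
    have b1 : DifferentiableAt ℝ (fun q => V q ^ 2 * px V q) p := ((dV p).pow 2).mul (d1 p)
    have b2 : DifferentiableAt ℝ (fun q => 6 * (V q ^ 2 * px V q)) p := b1.const_mul 6
    have b3 : DifferentiableAt ℝ (fun q => pt V q - 6 * (V q ^ 2 * px V q)) p := (dw p).sub b2
    rw [e, px_add b3 (d3 p), px_sub (dw p) b2,
      px_const_mul 6 b1, px_mul ((dV p).fun_pow 2) (d1 p), px_sq (dV p)]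
  rw [hU3, hUt, hF, hU1]
  beta_reduce
  ring



/-- Miura transformation: if `v` is smooth then, with `u := v² + v_x`,
`u_t - 6uu_x + u_xxx = (2v + ∂_x)(v_t - 6v²v_x + v_xxx)`; in particular, if `v`
solves the mKdV equation then `u` solves the KdV equation. -/
theorem miura_transformation (v : ℝ → ℝ → ℝ)
    (hv : ContDiff ℝ (⊤ : ℕ∞) (fun p : ℝ × ℝ => v p.1 p.2)) :
    let u : ℝ → ℝ → ℝ := fun x t => (v x t) ^ 2 + deriv (fun x' => v x' t) x
    let E : ℝ → ℝ → ℝ := fun x t =>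
      deriv (fun t' => v x t') t - 6 * (v x t) ^ 2 * deriv (fun x' => v x' t) x +
        deriv (fun x₁ => deriv (fun x₂ => deriv (fun x₃ => v x₃ t) x₂) x₁) x
    (∀ x t : ℝ,
      deriv (fun t' => u x t') t - 6 * u x t * deriv (fun x' => u x' t) x +
        deriv (fun x₁ => deriv (fun x₂ => deriv (fun x₃ => u x₃ t) x₂) x₁) x
      = 2 * v x t * E x t + deriv (fun x' => E x' t) x) ∧
    ((∀ x t : ℝ, E x t = 0) → ∀ x t : ℝ,
      deriv (fun t' => u x t') t - 6 * u x t * deriv (fun x' => u x' t) x +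
        deriv (fun x₁ => deriv (fun x₂ => deriv (fun x₃ => u x₃ t) x₂) x₁) x = 0) := by
  intro u E
  have main : ∀ x t : ℝ,
      deriv (fun t' => v x t' ^ 2 + deriv (fun x' => v x' t') x) t
        - 6 * (v x t ^ 2 + deriv (fun x' => v x' t) x) *
          deriv (fun x' => v x' t ^ 2 + deriv (fun x'' => v x'' t) x') x
        + deriv (fun x₁ => deriv (fun x₂ =>
            deriv (fun x₃ => v x₃ t ^ 2 + deriv (fun x' => v x' t) x₃) x₂) x₁) x
      = 2 * v x t * (deriv (fun t' => v x t') t - 6 * v x t ^ 2 * deriv (fun x' => v x' t) x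
          + deriv (fun x₁ => deriv (fun x₂ => deriv (fun x₃ => v x₃ t) x₂) x₁) x)
        + deriv (fun x' => deriv (fun t' => v x' t') t
            - 6 * v x' t ^ 2 * deriv (fun x'' => v x'' t) x'
            + deriv (fun x₁ => deriv (fun x₂ => deriv (fun x₃ => v x₃ t) x₂) x₁) x') x := by
    intro x t
    set V : ℝ × ℝ → ℝ := fun p => v p.1 p.2 with hVdef
    have hV : ContDiff ℝ (⊤ : ℕ∞) V := hv
    have h1 : ContDiff ℝ (⊤ : ℕ∞) (px V) := px_contDiff hV
    have h2 : ContDiff ℝ (⊤ : ℕ∞) (px (px V)) := px_contDiff h1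
    have h3 : ContDiff ℝ (⊤ : ℕ∞) (px (px (px V))) := px_contDiff h2
    have hw : ContDiff ℝ (⊤ : ℕ∞) (pt V) := pt_contDiff hV
    have hU : ContDiff ℝ (⊤ : ℕ∞) (fun q => V q ^ 2 + px V q) := (hV.pow 2).add h1
    have hU1 : ContDiff ℝ (⊤ : ℕ∞) (px (fun q => V q ^ 2 + px V q)) := px_contDiff hU
    have hU2 : ContDiff ℝ (⊤ : ℕ∞) (px (px (fun q => V q ^ 2 + px V q))) := px_contDiff hU1
    have hF : ContDiff ℝ (⊤ : ℕ∞) (fun q => pt V q - 6 * V q ^ 2 * px V q + px (px (px V)) q) := by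
      fun_prop
    have e1 : ∀ a b : ℝ, deriv (fun x' => v x' b) a = px V (a, b) :=
      fun a b => deriv_x hV a b
    have e2 : ∀ a b : ℝ, deriv (fun t' => v a t') b = pt V (a, b) :=
      fun a b => deriv_t hV a b
    have e5 : ∀ a b : ℝ, deriv (fun x' => px V (x', b)) a = px (px V) (a, b) :=
      fun a b => deriv_x h1 a b
    have e6 : ∀ a b : ℝ, deriv (fun x' => px (px V) (x', b)) a = px (px (px V)) (a, b) :=
      fun a b => deriv_x h2 a b
    have e3 : ∀ a b : ℝ, deriv (fun t' => v a t' ^ 2 + px V (a, t')) b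
        = pt (fun q => V q ^ 2 + px V q) (a, b) := fun a b => deriv_t hU a b
    have e4 : ∀ a b : ℝ, deriv (fun x' => v x' b ^ 2 + px V (x', b)) a
        = px (fun q => V q ^ 2 + px V q) (a, b) := fun a b => deriv_x hU a b
    have e7 : ∀ a b : ℝ, deriv (fun x' => px (fun q => V q ^ 2 + px V q) (x', b)) a
        = px (px (fun q => V q ^ 2 + px V q)) (a, b) := fun a b => deriv_x hU1 a b
    have e8 : ∀ a b : ℝ, deriv (fun x' => px (px (fun q => V q ^ 2 + px V q)) (x', b)) a
        = px (px (px (fun q => V q ^ 2 + px V q))) (a, b) := fun a b => deriv_x hU2 a b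
    have e9 : ∀ a b : ℝ, deriv (fun x' => pt V (x', b) - 6 * v x' b ^ 2 * px V (x', b)
          + px (px (px V)) (x', b)) a
        = px (fun q => pt V q - 6 * V q ^ 2 * px V q + px (px (px V)) q) (a, b) :=
      fun a b => deriv_x hF a b
    simp only [e1, e2, e5, e6, e3, e4, e7, e8, e9]
    exact key V hV (x, t)
  refine ⟨fun x t => main x t, fun hE x t => ?_⟩
  have hz : ∀ a b : ℝ, deriv (fun t' => v a t') b - 6 * v a b ^ 2 * deriv (fun x' => v x' b) a
      + deriv (fun x₁ => deriv (fun x₂ => deriv (fun x₃ => v x₃ b) x₂) x₁) a = 0 :=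
    fun a b => hE a b
  have hR : 2 * v x t * (deriv (fun t' => v x t') t - 6 * v x t ^ 2 * deriv (fun x' => v x' t) x
        + deriv (fun x₁ => deriv (fun x₂ => deriv (fun x₃ => v x₃ t) x₂) x₁) x)
      + deriv (fun x' => deriv (fun t' => v x' t') t
          - 6 * v x' t ^ 2 * deriv (fun x'' => v x'' t) x'
          + deriv (fun x₁ => deriv (fun x₂ => deriv (fun x₃ => v x₃ t) x₂) x₁) x') x = 0 := by
    simp only [hz]
    simp
  exact (main x t).trans hR
end

section
/- Let z₁, z₂ > 0 with z₁ ≠ z₂. The equation (2z - U₁)(2z - U₂) = U₁U₂·e^{2(x₁-x₂)z} in z > 0, with U₁ > 0, U₂ > 0 and x₂ - x₁ > 1/U₁ + 1/U₂, has exactly two positive solutions. -/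
/-!
Put `c = 2 (x₁ - x₂) < 0` and `g z = (2z - U₁)(2z - U₂) - U₁U₂ e^{cz}`, so that `g 0 = 0`.
Since `g'' z = 8 - U₁U₂c² e^{cz}` is injective, Rolle's theorem applied twice shows that `g`
has at most three zeros, hence at most two positive ones. On the other hand
`g'(0) = 2U₁U₂(x₂ - x₁) - 2(U₁ + U₂) > 0` is exactly the hypothesis on `x₂ - x₁`, so `g` is
positive just right of `0`; it is negative at `U₁/2` and positive at `(U₁ + U₂)/2`, and the
intermediate value theorem gives one zero on each side of `U₁/2`.
-/

open Set Real Function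

theorem not_four_eq_of_injective_deriv2 {f f' f'' : ℝ → ℝ}
    (hf : ∀ x, HasDerivAt f (f' x) x) (hf' : ∀ x, HasDerivAt f' (f'' x) x)
    (hf'' : Injective f'') {a b c d : ℝ} (hab : a < b) (hbc : b < c) (hcd : c < d) :
    ¬ (f a = f b ∧ f b = f c ∧ f c = f d) := by
  have rolle : ∀ {g g' : ℝ → ℝ}, (∀ x, HasDerivAt g (g' x) x) →
      ∀ {p q : ℝ}, p < q → g p = g q → ∃ s ∈ Ioo p q, g' s = 0 := fun hg _ _ hpq hgpq =>
    exists_hasDerivAt_eq_zero hpq (HasDerivAt.continuousOn fun x _ => hg x) hgpq fun x _ => hg x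
  rintro ⟨h₁, h₂, h₃⟩
  obtain ⟨s₁, hs₁, e₁⟩ := rolle hf hab h₁
  obtain ⟨s₂, hs₂, e₂⟩ := rolle hf hbc h₂
  obtain ⟨s₃, hs₃, e₃⟩ := rolle hf hcd h₃
  obtain ⟨t₁, ht₁, e₄⟩ := rolle hf' (hs₁.2.trans hs₂.1) (e₁.trans e₂.symm)
  obtain ⟨t₂, ht₂, e₅⟩ := rolle hf' (hs₂.2.trans hs₃.1) (e₂.trans e₃.symm)
  exact (ht₁.2.trans ht₂.1).ne (hf'' (e₄.trans e₅.symm))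

theorem Set.eq_pair_of_not_three_lt {α : Type*} [LinearOrder α] {S : Set α} {a b : α}
    (hS : ∀ p ∈ S, ∀ q ∈ S, ∀ r ∈ S, ¬ (p < q ∧ q < r)) (ha : a ∈ S) (hb : b ∈ S)
    (hab : a < b) : S = {a, b} := by
  refine Subset.antisymm (fun z hz => ?_) (insert_subset ha (singleton_subset_iff.2 hb))
  rcases lt_trichotomy z a with hza | rfl | haz
  · exact (hS z hz a ha b hb ⟨hza, hab⟩).elim
  · exact Or.inl rfl
  rcases lt_trichotomy z b with hzb | rfl | hbz
  · exact (hS a ha z hz b hb ⟨haz, hzb⟩).elim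
  · exact Or.inr rfl
  · exact (hS a ha b hb z hz ⟨hab, hbz⟩).elim

theorem injective_const_sub_mul_exp_mul {a k c : ℝ} (hk : k ≠ 0) (hc : c ≠ 0) :
    Injective fun z => a - k * exp (c * z) := by
  intro x y hxy
  exact mul_left_cancel₀ hc (exp_injective (mul_left_cancel₀ hk (sub_right_injective hxy)))

noncomputable def boundStateFn (U₁ U₂ c z : ℝ) : ℝ :=
  (2 * z - U₁) * (2 * z - U₂) - U₁ * U₂ * exp (c * z)

section BoundStateFn

variable {U₁ U₂ c : ℝ}

theorem boundStateFn_zero : boundStateFn U₁ U₂ c 0 = 0 := by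
  simp only [boundStateFn, mul_zero, exp_zero]
  ring

theorem hasDerivAt_boundStateFn (z : ℝ) :
    HasDerivAt (boundStateFn U₁ U₂ c) (8 * z - 2 * (U₁ + U₂) - U₁ * U₂ * c * exp (c * z)) z := by
  have he := ((hasDerivAt_id z).const_mul c).exp
  have h₁ := ((hasDerivAt_id z).const_mul 2).sub_const U₁
  have h₂ := ((hasDerivAt_id z).const_mul 2).sub_const U₂
  exact ((h₁.mul h₂).sub (he.const_mul (U₁ * U₂))).congr_deriv (by simp only [id]; ring)

theorem hasDerivAt_deriv_boundStateFn (z : ℝ) :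
    HasDerivAt (fun z => 8 * z - 2 * (U₁ + U₂) - U₁ * U₂ * c * exp (c * z))
      (8 - U₁ * U₂ * c ^ 2 * exp (c * z)) z := by
  have he := ((hasDerivAt_id z).const_mul c).exp
  exact ((((hasDerivAt_id z).const_mul 8).sub_const (2 * (U₁ + U₂))).sub
    (he.const_mul (U₁ * U₂ * c))).congr_deriv (by simp only [id]; ring)

theorem not_three_lt_pos_roots_boundStateFn (hU : U₁ * U₂ ≠ 0) (hc : c ≠ 0) :
    ∀ p ∈ {z | 0 < z ∧ boundStateFn U₁ U₂ c z = 0}, ∀ q ∈ {z | 0 < z ∧ boundStateFn U₁ U₂ c z = 0},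
      ∀ r ∈ {z | 0 < z ∧ boundStateFn U₁ U₂ c z = 0}, ¬ (p < q ∧ q < r) := by
  rintro p ⟨hp, hgp⟩ q ⟨-, hgq⟩ r ⟨-, hgr⟩ ⟨hpq, hqr⟩
  exact not_four_eq_of_injective_deriv2 hasDerivAt_boundStateFn hasDerivAt_deriv_boundStateFn
    (injective_const_sub_mul_exp_mul (mul_ne_zero hU (pow_ne_zero 2 hc)) hc) hp hpq hqr
    ⟨boundStateFn_zero.trans hgp.symm, hgp.trans hgq.symm, hgq.trans hgr.symm⟩

theorem exists_two_pos_roots_boundStateFn (hU₁ : 0 < U₁) (hU₂ : 0 < U₂) (hc : c < 0)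
    (hslope : 0 < -2 * (U₁ + U₂) - U₁ * U₂ * c) :
    ∃ a b, 0 < a ∧ a < b ∧ boundStateFn U₁ U₂ c a = 0 ∧ boundStateFn U₁ U₂ c b = 0 := by
  have hcont : Continuous (boundStateFn U₁ U₂ c) :=
    continuous_iff_continuousAt.2 fun z => (hasDerivAt_boundStateFn z).continuousAt
  have hmid : boundStateFn U₁ U₂ c (U₁ / 2) < 0 := by
    have := mul_pos (mul_pos hU₁ hU₂) (exp_pos (c * (U₁ / 2)))
    simp only [boundStateFn]
    linarith [show (2 * (U₁ / 2) - U₁) * (2 * (U₁ / 2) - U₂) = 0 by ring]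
  have hright : 0 < boundStateFn U₁ U₂ c ((U₁ + U₂) / 2) := by
    have hexp : exp (c * ((U₁ + U₂) / 2)) < 1 :=
      exp_lt_one_iff.2 (mul_neg_of_neg_of_pos hc (by positivity))
    have := mul_lt_mul_of_pos_left hexp (mul_pos hU₁ hU₂)
    simp only [boundStateFn]
    linarith [show (2 * ((U₁ + U₂) / 2) - U₁) * (2 * ((U₁ + U₂) / 2) - U₂) = U₁ * U₂ by ring]
  obtain ⟨ε, hε, hleft⟩ : ∃ ε ∈ Ioo 0 (U₁ / 2), 0 < boundStateFn U₁ U₂ c ε := by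
    have hd : deriv (boundStateFn U₁ U₂ c) 0 > 0 := by
      simpa [(hasDerivAt_boundStateFn 0).deriv] using hslope
    obtain ⟨ε, hsign, hε⟩ :=
      (((eventually_nhdsWithin_sign_eq_of_deriv_pos hd boundStateFn_zero).filter_mono
        nhdsWithin_le_nhds).and (Ioo_mem_nhdsGT (half_pos hU₁))).exists
    exact ⟨ε, hε, sign_eq_one_iff.1 (hsign.trans (sign_pos (sub_pos.2 hε.1)))⟩
  obtain ⟨a, ha, hga⟩ := intermediate_value_Ioo' hε.2.le hcont.continuousOn ⟨hmid, hleft⟩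
  obtain ⟨b, hb, hgb⟩ := intermediate_value_Ioo (by linarith) hcont.continuousOn ⟨hmid, hright⟩
  exact ⟨a, b, hε.1.trans ha.1, ha.2.trans hb.1, hga, hgb⟩

end BoundStateFn

/-- If `U₁, U₂ > 0` and `x₂ - x₁ > 1/U₁ + 1/U₂`, then the equation
`(2z - U₁)(2z - U₂) = U₁U₂·e^{2(x₁-x₂)z}` has exactly two positive solutions. -/
theorem two_bound_states (U₁ U₂ x₁ x₂ : ℝ) (hU₁ : 0 < U₁) (hU₂ : 0 < U₂)
    (hx : x₂ - x₁ > 1 / U₁ + 1 / U₂) :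
    {z : ℝ | 0 < z ∧
      (2 * z - U₁) * (2 * z - U₂) = U₁ * U₂ * Real.exp (2 * (x₁ - x₂) * z)}.encard = 2 := by
  have hc : 2 * (x₁ - x₂) < 0 := by linarith [show 0 < 1 / U₁ + 1 / U₂ by positivity]
  have hslope : 0 < -2 * (U₁ + U₂) - U₁ * U₂ * (2 * (x₁ - x₂)) := by
    rw [gt_iff_lt, div_add_div _ _ hU₁.ne' hU₂.ne', div_lt_iff₀ (mul_pos hU₁ hU₂)] at hx
    linarith
  obtain ⟨a, b, ha, hab, hga, hgb⟩ := exists_two_pos_roots_boundStateFn hU₁ hU₂ hc hslope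
  have hroots : {z : ℝ | 0 < z ∧
      (2 * z - U₁) * (2 * z - U₂) = U₁ * U₂ * Real.exp (2 * (x₁ - x₂) * z)} =
      {z | 0 < z ∧ boundStateFn U₁ U₂ (2 * (x₁ - x₂)) z = 0} := by
    simp only [boundStateFn, sub_eq_zero]
  rw [hroots, Set.eq_pair_of_not_three_lt
    (not_three_lt_pos_roots_boundStateFn (mul_pos hU₁ hU₂).ne' hc.ne) ⟨ha, hga⟩
    ⟨ha.trans hab, hgb⟩ hab, encard_pair hab.ne]
end

section
/- Suppose U₁ > 0, U₂ > 0, x₁ < x₂, and x₂ - x₁ < 1/U₁ + 1/U₂. Then the equation (2z - U₁)(2z - U₂) = U₁U₂·e^{2(x₁-x₂)z} has exactly one solution z > 0. -/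
/-- If `U₁, U₂ > 0`, `x₁ < x₂` and `x₂ - x₁ < 1/U₁ + 1/U₂`, then the equation
`(2z - U₁)(2z - U₂) = U₁U₂·e^{2(x₁-x₂)z}` has exactly one positive solution. -/
theorem one_bound_state_well (U₁ U₂ x₁ x₂ : ℝ) (hU₁ : 0 < U₁) (hU₂ : 0 < U₂)
    (hx : x₁ < x₂) (hx' : x₂ - x₁ < 1 / U₁ + 1 / U₂) :
    ∃! z : ℝ, 0 < z ∧
      (2 * z - U₁) * (2 * z - U₂) = U₁ * U₂ * Real.exp (2 * (x₁ - x₂) * z) := by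
  set L := x₂ - x₁ with hLdef
  have hL0 : 0 < L := by rw [hLdef]; linarith
  set F : ℝ → ℝ := fun z => (2*z - U₁) * (2*z - U₂) * Real.exp (2*L*z) with hFdef
  have hFcont : Continuous F := by rw [hFdef]; fun_prop
  have hequiv : ∀ z : ℝ,
      ((2 * z - U₁) * (2 * z - U₂) = U₁ * U₂ * Real.exp (2 * (x₁ - x₂) * z)) ↔ F z = U₁ * U₂ := by
    intro z
    have he : Real.exp (2 * (x₁ - x₂) * z) = (Real.exp (2*L*z))⁻¹ := by
      rw [← Real.exp_neg]
      congr 1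
      rw [hLdef]; ring
    rw [he, hFdef]
    simp only
    rw [eq_mul_inv_iff_mul_eq₀ (Real.exp_ne_zero _)]
  have hderiv : ∀ z : ℝ, HasDerivAt F
      ((2*(2*z-U₂) + (2*z-U₁)*2) * Real.exp (2*L*z)
        + (2*z-U₁)*(2*z-U₂) * (Real.exp (2*L*z) * (2*L))) z := by
    intro z
    have ha : HasDerivAt (fun z : ℝ => 2*z - U₁) 2 z := by
      simpa using ((hasDerivAt_id z).const_mul 2).sub_const U₁
    have hb : HasDerivAt (fun z : ℝ => 2*z - U₂) 2 z := by
      simpa using ((hasDerivAt_id z).const_mul 2).sub_const U₂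
    have hp : HasDerivAt (fun z : ℝ => (2*z - U₁)*(2*z - U₂))
        (2*(2*z-U₂) + (2*z-U₁)*2) z := ha.mul hb
    have hl : HasDerivAt (fun z : ℝ => 2*L*z) (2*L) z := by
      simpa using (hasDerivAt_id z).const_mul (2*L)
    exact hp.mul hl.exp
  set m : ℝ := min U₁ U₂ / 2 with hmdef
  set M : ℝ := max U₁ U₂ / 2 with hMdef
  have h2m : 2*m = min U₁ U₂ := by rw [hmdef]; ring
  have h2M : 2*M = max U₁ U₂ := by rw [hMdef]; ring
  have hM0 : 0 < M := by
    have : 0 < max U₁ U₂ := lt_of_lt_of_le hU₁ (le_max_left _ _)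
    rw [hMdef]; linarith
  have hm0 : 0 < m := by
    have : 0 < min U₁ U₂ := lt_min hU₁ hU₂
    rw [hmdef]; linarith
  -- strict monotonicity on [M, ∞)
  have hmono : StrictMonoOn F (Set.Ici M) := by
    apply strictMonoOn_of_deriv_pos (convex_Ici M) hFcont.continuousOn
    intro x hxx
    rw [interior_Ici] at hxx
    have hxM : M < x := hxx
    have ha : 0 < 2*x - U₁ := by
      have := le_max_left U₁ U₂; linarith [h2M]
    have hb : 0 < 2*x - U₂ := by
      have := le_max_right U₁ U₂; linarith [h2M]
    rw [(hderiv x).deriv]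
    have he := Real.exp_pos (2*L*x)
    nlinarith [mul_pos he ha, mul_pos he hb,
      mul_pos hL0 (mul_pos (mul_pos ha hb) he)]
  -- strict antitonicity on [0, m]
  have hanti : StrictAntiOn F (Set.Icc 0 m) := by
    apply strictAntiOn_of_deriv_neg (convex_Icc 0 m) hFcont.continuousOn
    intro x hxx
    rw [interior_Icc] at hxx
    obtain ⟨hx0, hxm⟩ := hxx
    have ha : 2*x < U₁ := by have := min_le_left U₁ U₂; linarith [h2m]
    have hb : 2*x < U₂ := by have := min_le_right U₁ U₂; linarith [h2m]
    rw [(hderiv x).deriv]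
    have key2 : L * ((U₁-2*x)*(U₂-2*x)) < (U₁-2*x) + (U₂-2*x) := by
      have i1 : 1/U₁ < 1/(U₁-2*x) := by
        apply one_div_lt_one_div_of_lt <;> linarith
      have i2 : 1/U₂ < 1/(U₂-2*x) := by
        apply one_div_lt_one_div_of_lt <;> linarith
      have h1 : L < 1/(U₁-2*x) + 1/(U₂-2*x) := by linarith
      have h2 : L * ((U₁-2*x)*(U₂-2*x)) <
          (1/(U₁-2*x) + 1/(U₂-2*x)) * ((U₁-2*x)*(U₂-2*x)) := by
        apply mul_lt_mul_of_pos_right h1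
        apply mul_pos <;> linarith
      have hane : (U₁-2*x) ≠ 0 := by intro h; linarith [h]
      have hbne : (U₂-2*x) ≠ 0 := by intro h; linarith [h]
      have h3 : (1/(U₁-2*x) + 1/(U₂-2*x)) * ((U₁-2*x)*(U₂-2*x))
          = (U₂-2*x) + (U₁-2*x) := by
        field_simp
      rw [h3] at h2
      linarith
    have hrw : (2*(2*x-U₂) + (2*x-U₁)*2) * Real.exp (2*L*x)
        + (2*x-U₁)*(2*x-U₂) * (Real.exp (2*L*x) * (2*L))
        = 2*Real.exp (2*L*x) * (L*((U₁-2*x)*(U₂-2*x)) - ((U₁-2*x)+(U₂-2*x))) := by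
      ring
    rw [hrw]
    apply mul_neg_of_pos_of_neg (by positivity)
    linarith
  -- special values
  have hF0 : F 0 = U₁ * U₂ := by
    rw [hFdef]; simp
  have hFM : F M = 0 := by
    rcases max_choice U₁ U₂ with h | h
    · have h0 : 2*M - U₁ = 0 := by rw [h2M, h]; ring
      rw [hFdef]; simp only; rw [h0]; ring
    · have h0 : 2*M - U₂ = 0 := by rw [h2M, h]; ring
      rw [hFdef]; simp only; rw [h0]; ring
  set z₀ : ℝ := (U₁ + U₂)/2 with hz₀def
  have hz₀pos : 0 < z₀ := by rw [hz₀def]; linarith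
  have hMz₀ : M < z₀ := by
    have : max U₁ U₂ < U₁ + U₂ := max_lt (by linarith) (by linarith)
    rw [hz₀def]; linarith [h2M]
  have hFz₀ : U₁ * U₂ < F z₀ := by
    have h1 : 2*z₀ - U₁ = U₂ := by rw [hz₀def]; ring
    have h2 : 2*z₀ - U₂ = U₁ := by rw [hz₀def]; ring
    have h3 : 1 < Real.exp (2*L*z₀) := by
      rw [show (1:ℝ) = Real.exp 0 from Real.exp_zero.symm]
      apply Real.exp_lt_exp.mpr
      have : 0 < 2*L*z₀ := by positivity
      linarith
    have : F z₀ = U₂ * U₁ * Real.exp (2*L*z₀) := by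
      rw [hFdef]; simp only; rw [h1, h2]
    rw [this]
    nlinarith [mul_pos hU₁ hU₂]
  -- existence via IVT on [M, z₀]
  obtain ⟨z, hzmem, hzF⟩ := intermediate_value_Icc hMz₀.le hFcont.continuousOn
    ⟨by rw [hFM]; positivity, hFz₀.le⟩
  have hzM : M < z := by
    rcases lt_or_eq_of_le hzmem.1 with h | h
    · exact h
    · exfalso; rw [← h, hFM] at hzF; nlinarith [mul_pos hU₁ hU₂]
  have hz0 : 0 < z := lt_trans hM0 hzM
  -- any positive solution is > M
  have huniq : ∀ w : ℝ, 0 < w → F w = U₁ * U₂ → M < w := by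
    intro w hw hFw
    by_contra hcon
    push_neg at hcon
    rcases le_or_gt m w with h1 | h1
    · have hp : (2*w - U₁)*(2*w - U₂) ≤ 0 := by
        rcases le_total U₁ U₂ with h | h
        · have e1 : min U₁ U₂ = U₁ := min_eq_left h
          have e2 : max U₁ U₂ = U₂ := max_eq_right h
          apply mul_nonpos_of_nonneg_of_nonpos
          · rw [← e1, ← h2m]; linarith
          · rw [← e2, ← h2M]; linarith
        · have e1 : min U₁ U₂ = U₂ := min_eq_right h
          have e2 : max U₁ U₂ = U₁ := max_eq_left h
          apply mul_nonpos_of_nonpos_of_nonneg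
          · rw [← e2, ← h2M]; linarith
          · rw [← e1, ← h2m]; linarith
      have hFle : F w ≤ 0 := by
        rw [hFdef]
        simp only
        exact mul_nonpos_of_nonpos_of_nonneg hp (Real.exp_pos _).le
      nlinarith [mul_pos hU₁ hU₂]
    · have hlt : F w < F 0 := hanti ⟨le_refl 0, hm0.le⟩ ⟨hw.le, h1.le⟩ hw
      rw [hF0, hFw] at hlt
      exact lt_irrefl _ hlt
  refine ⟨z, ⟨hz0, (hequiv z).mpr hzF⟩, ?_⟩
  rintro w ⟨hw0, hweq⟩
  have hFw := (hequiv w).mp hweq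
  have hwM := huniq w hw0 hFw
  exact hmono.injOn (Set.mem_Ici.mpr hwM.le) (Set.mem_Ici.mpr hzM.le) (hFw.trans hzF.symm)
end

section
/- Define the sequence Aₗ by A₁ = -1, A₂ = σh - 2, and A_{L+2} + (σh - 2)A_{L+1} + A_L = 0, treated as polynomials in the variable σh. Then Aₗ(σh) is a polynomial of degree at most L-1 in σh, and its roots are exactly (σh)ⱼ^L = 2 + 2cos(jπ/L) for j = 1, 2, ..., L-1, which are L-1 distinct positive numbers. -/
open Polynomial Real

/-!
The sign-twisted sequence `(-1)^L A_L` satisfies the recurrence of the rescaled Chebyshev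
polynomials `S_n(x) = U_n(x/2)` in the variable `t - 2`, so `A_L(t) = (-1)^L S_{L-1}(t - 2)`.
The roots of `U_{L-1}` are `cos(jπ/L)`, `1 ≤ j ≤ L-1`, hence those of `A_L` are
`2 + 2 cos(jπ/L)`; these angles lie in `(0, π)`, where `cos` is injective and exceeds `-1`.
-/

namespace Polynomial.Chebyshev

theorem natDegree_S_le {R : Type*} [CommRing R] (n : ℕ) : (S R n).natDegree ≤ n := by
  induction n using Nat.twoStepInduction with
  | zero => simp
  | one => simpa using natDegree_X_le
  | more n _ ih =>
    push_cast at ih ⊢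
    rw [S_add_two]
    refine (natDegree_sub_le _ _).trans (max_le ?_ (by omega))
    exact natDegree_mul_le.trans (by linarith [natDegree_X_le (R := R)])

theorem eval_S_real_eq_zero_iff (n : ℕ) (x : ℝ) :
    (S ℝ n).eval x = 0 ↔ ∃ j : ℕ, 1 ≤ j ∧ j ≤ n ∧ x = 2 * cos (j * π / (n + 1)) := by
  rw [S_eq_U_comp_half_mul_X, eval_comp, ← IsRoot.def, ← mem_roots (U_ne_zero ℝ n (by omega)),
    roots_U_real, Finset.mem_val, Finset.mem_image]
  simp only [Finset.mem_range, invOf_eq_inv, eval_mul, eval_C, eval_X]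
  constructor
  · rintro ⟨k, hk, hx⟩
    refine ⟨k + 1, by omega, hk, ?_⟩
    push_cast
    linarith
  · rintro ⟨j, hj, hjn, rfl⟩
    refine ⟨j - 1, by omega, ?_⟩
    rw [Nat.cast_sub hj]
    ring_nf

theorem eq_neg_one_pow_mul_S_comp_of_recurrence {R : Type*} [CommRing R] (a : R[X])
    (A : ℕ → R[X]) (h1 : A 1 = -1) (h2 : A 2 = a)
    (hrec : ∀ L, 1 ≤ L → A (L + 2) = -a * A (L + 1) - A L) (n : ℕ) :
    A (n + 1) = (-1) ^ (n + 1) * (S R n).comp a := by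
  induction n using Nat.twoStepInduction with
  | zero => simp [h1]
  | one => simp [h2]
  | more n ih₀ ih₁ =>
    rw [hrec (n + 1) (by omega), ih₁, ih₀]
    push_cast
    rw [S_add_two]
    simp only [sub_comp, mul_comp, X_comp]
    ring

end Polynomial.Chebyshev

theorem Real.nat_mul_pi_div_mem_Ioo {j L : ℕ} (hj : 1 ≤ j) (hjL : j < L) :
    (j : ℝ) * π / L ∈ Set.Ioo 0 π := by
  have hL : (0 : ℝ) < L := by exact_mod_cast (by omega : 0 < L)
  refine ⟨by positivity, ?_⟩
  rw [div_lt_iff₀ hL, mul_comm]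
  gcongr

theorem Real.neg_one_lt_cos_of_mem_Ioo {θ : ℝ} (hθ : θ ∈ Set.Ioo 0 π) : -1 < cos θ := by
  rw [← cos_pi]
  exact strictAntiOn_cos (Set.Ioo_subset_Icc_self hθ) ⟨pi_pos.le, le_rfl⟩ hθ.2

open Polynomial.Chebyshev in
/-- The polynomials `A_L` defined by `A₁ = -1`, `A₂ = t - 2` and
`A_{L+2} + (t-2)A_{L+1} + A_L = 0` have degree at most `L-1`, and the roots of
`A_L` are exactly the `L-1` distinct positive numbers `2 + 2cos(jπ/L)`,
`j = 1, …, L-1`. -/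
theorem chebyshev_recurrence_roots (A : ℕ → Polynomial ℝ)
    (h1 : A 1 = Polynomial.C (-1))
    (h2 : A 2 = Polynomial.X - Polynomial.C 2)
    (hrec : ∀ L : ℕ, 1 ≤ L →
      A (L + 2) = -(Polynomial.X - Polynomial.C 2) * A (L + 1) - A L) :
    ∀ L : ℕ, 1 ≤ L →
      (A L).natDegree ≤ L - 1 ∧
      (∀ t : ℝ, (A L).eval t = 0 ↔
        ∃ j : ℕ, 1 ≤ j ∧ j ≤ L - 1 ∧ t = 2 + 2 * Real.cos (j * Real.pi / L)) ∧
      (∀ j : ℕ, 1 ≤ j → j ≤ L - 1 → 0 < 2 + 2 * Real.cos (j * Real.pi / L)) ∧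
      (∀ j j' : ℕ, 1 ≤ j → j ≤ L - 1 → 1 ≤ j' → j' ≤ L - 1 →
        2 + 2 * Real.cos (j * Real.pi / L) = 2 + 2 * Real.cos (j' * Real.pi / L) →
        j = j') := by
  intro L hL
  obtain ⟨n, rfl⟩ : ∃ n, L = n + 1 := ⟨L - 1, by omega⟩
  have hA := eq_neg_one_pow_mul_S_comp_of_recurrence _ A (by simpa using h1) h2 hrec n
  have hangle : ∀ j, 1 ≤ j → j ≤ n + 1 - 1 → (j : ℝ) * π / (n + 1 : ℕ) ∈ Set.Ioo 0 π :=
    fun j hj hjn ↦ nat_mul_pi_div_mem_Ioo hj (by omega)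
  refine ⟨?_, fun t ↦ ?_, fun j hj hjn ↦ ?_, fun j j' hj hjn hj' hjn' heq ↦ ?_⟩
  · rw [hA, Nat.add_sub_cancel]
    refine natDegree_mul_le.trans ?_
    simpa [natDegree_comp] using natDegree_S_le n
  · rw [hA, eval_mul, mul_eq_zero, eval_comp, eval_S_real_eq_zero_iff]
    simp [sub_eq_iff_eq_add']
  · linarith [neg_one_lt_cos_of_mem_Ioo (hangle j hj hjn)]
  · have hcos := injOn_cos (Set.Ioo_subset_Icc_self (hangle j hj hjn))
      (Set.Ioo_subset_Icc_self (hangle j' hj' hjn')) (by linarith)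
    have : ((n + 1 : ℕ) : ℝ) ≠ 0 := by positivity
    field_simp at hcos
    exact_mod_cast hcos
end

section
/- Suppose y : ℝ → ℝ is a smooth solution of the Painlevé II equation y''(s) = s·y(s) + 2y³(s). Then u(x,t) := (3t)^{-2/3}·(y²(x/(3t)^{1/3}) + y'(x/(3t)^{1/3})) satisfies the KdV equation u_t - 6uu_x + u_xxx = 0 exactly, for all x ∈ ℝ and t > 0. -/
set_option maxHeartbeats 1000000


/-- If `y` is a smooth solution of Painlevé II, `y'' = sy + 2y³`, then the
self-similar profile `u(x,t) = (3t)^{-2/3}(y²(x/(3t)^{1/3}) + y'(x/(3t)^{1/3}))`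
solves the KdV equation `u_t - 6uu_x + u_xxx = 0` for all `x ∈ ℝ`, `t > 0`. -/
theorem painleveII_selfsimilar_kdv (y : ℝ → ℝ) (hy : ContDiff ℝ (⊤ : ℕ∞) y)
    (hP : ∀ s : ℝ, deriv (deriv y) s = s * y s + 2 * (y s) ^ 3) :
    let u : ℝ → ℝ → ℝ := fun x t =>
      (3 * t) ^ (-(2 : ℝ) / 3) *
        ((y (x / (3 * t) ^ ((1 : ℝ) / 3))) ^ 2 + deriv y (x / (3 * t) ^ ((1 : ℝ) / 3)))
    ∀ (x : ℝ) (t : ℝ), 0 < t →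
      deriv (fun t' => u x t') t - 6 * u x t * deriv (fun x' => u x' t) x +
        deriv (fun x₁ => deriv (fun x₂ => deriv (fun x₃ => u x₃ t) x₂) x₁) x = 0 := by
  intro u x t ht
  have hu : u = fun x t =>
      (3 * t) ^ (-(2 : ℝ) / 3) *
        ((y (x / (3 * t) ^ ((1 : ℝ) / 3))) ^ 2 + deriv y (x / (3 * t) ^ ((1 : ℝ) / 3))) := rfl
  -- differentiability
  have hy0 : ContDiff ℝ ((⊤ : ℕ∞) : WithTop ℕ∞) y := hy.of_le (by simp)
  have hdy : Differentiable ℝ y := hy.differentiable (by simp)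
  have hy1 : ContDiff ℝ ((⊤ : ℕ∞) : WithTop ℕ∞) (deriv y) := (contDiff_infty_iff_deriv.mp hy0).2
  have hdy1 : Differentiable ℝ (deriv y) := hy1.differentiable (by simp)
  have hy2 : ContDiff ℝ ((⊤ : ℕ∞) : WithTop ℕ∞) (deriv (deriv y)) := (contDiff_infty_iff_deriv.mp hy1).2
  have hdy2 : Differentiable ℝ (deriv (deriv y)) := hy2.differentiable (by simp)
  have hy3c : ContDiff ℝ ((⊤ : ℕ∞) : WithTop ℕ∞) (deriv (deriv (deriv y))) := (contDiff_infty_iff_deriv.mp hy2).2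
  have hdy3 : Differentiable ℝ (deriv (deriv (deriv y))) := hy3c.differentiable (by simp)
  -- third and fourth derivatives via the ODE
  have hy3 : ∀ z : ℝ, deriv (deriv (deriv y)) z
      = y z + z * deriv y z + 6 * (y z) ^ 2 * deriv y z := by
    intro z
    have h2 : deriv (deriv y) = fun w => w * y w + 2 * (y w) ^ 3 := funext hP
    rw [h2]
    have h : HasDerivAt (fun w : ℝ => w * y w + 2 * (y w) ^ 3)
        (y z + z * deriv y z + 6 * (y z) ^ 2 * deriv y z) z := by
      have := ((hasDerivAt_id' z).mul (hdy z).hasDerivAt).add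
        (((hdy z).hasDerivAt.pow 3).const_mul 2)
      refine this.congr_deriv ?_
      push_cast; ring
    rw [h.deriv]
  have hy4 : ∀ z : ℝ, deriv (deriv (deriv (deriv y))) z
      = 2 * deriv y z + z * deriv (deriv y) z + 12 * y z * (deriv y z) ^ 2
        + 6 * (y z) ^ 2 * deriv (deriv y) z := by
    intro z
    have h3 : deriv (deriv (deriv y))
        = fun w => y w + w * deriv y w + 6 * (y w) ^ 2 * deriv y w := funext hy3
    rw [h3]
    have h : HasDerivAt (fun w : ℝ => y w + w * deriv y w + 6 * (y w) ^ 2 * deriv y w)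
        (2 * deriv y z + z * deriv (deriv y) z + 12 * y z * (deriv y z) ^ 2
          + 6 * (y z) ^ 2 * deriv (deriv y) z) z := by
      have := (((hdy z).hasDerivAt.add
          ((hasDerivAt_id' z).mul (hdy1 z).hasDerivAt)).add
          ((((hdy z).hasDerivAt.pow 2).const_mul 6).mul (hdy1 z).hasDerivAt))
      refine this.congr_deriv ?_
      simp only [Pi.pow_apply]
      push_cast; ring
    rw [h.deriv]
  simp only [hu]
  have h3t : (0:ℝ) < 3 * t := by linarith
  set c : ℝ := (3 * t) ^ ((1:ℝ)/3) with hc_def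
  have hc : 0 < c := Real.rpow_pos_of_pos h3t _
  have hcne : c ≠ 0 := ne_of_gt hc
  set k : ℝ := (3 * t) ^ (-(2:ℝ)/3) with hk_def
  -- x-direction building blocks
  have hid : ∀ z : ℝ, HasDerivAt (fun w : ℝ => w / c) (1 / c) z := by
    intro z
    simpa using (hasDerivAt_id' z).div_const c
  have hY : ∀ z : ℝ, HasDerivAt (fun w : ℝ => y (w / c)) (deriv y (z / c) * (1 / c)) z := by
    intro z
    exact (hdy (z / c)).hasDerivAt.comp z (hid z)
  have hY1 : ∀ z : ℝ, HasDerivAt (fun w : ℝ => deriv y (w / c))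
      (deriv (deriv y) (z / c) * (1 / c)) z := by
    intro z
    exact (hdy1 (z / c)).hasDerivAt.comp z (hid z)
  have hY2 : ∀ z : ℝ, HasDerivAt (fun w : ℝ => deriv (deriv y) (w / c))
      (deriv (deriv (deriv y)) (z / c) * (1 / c)) z := by
    intro z
    exact (hdy2 (z / c)).hasDerivAt.comp z (hid z)
  have hY3 : ∀ z : ℝ, HasDerivAt (fun w : ℝ => deriv (deriv (deriv y)) (w / c))
      (deriv (deriv (deriv (deriv y))) (z / c) * (1 / c)) z := by
    intro z
    exact (hdy3 (z / c)).hasDerivAt.comp z (hid z)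
  -- first x derivative
  have D1 : ∀ z : ℝ, deriv (fun w => k * (y (w / c) ^ 2 + deriv y (w / c))) z
      = k / c * (2 * y (z / c) * deriv y (z / c) + deriv (deriv y) (z / c)) := by
    intro z
    have H : HasDerivAt (fun w => k * (y (w / c) ^ 2 + deriv y (w / c)))
        (k / c * (2 * y (z / c) * deriv y (z / c) + deriv (deriv y) (z / c))) z := by
      have := (((hY z).pow 2).add (hY1 z)).const_mul k
      refine this.congr_deriv ?_
      push_cast; ring
    exact H.deriv
  -- second x derivative
  have D2 : ∀ z : ℝ, deriv (fun w =>
        k / c * (2 * y (w / c) * deriv y (w / c) + deriv (deriv y) (w / c))) z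
      = k / c ^ 2 * (2 * (deriv y (z / c)) ^ 2 + 2 * y (z / c) * deriv (deriv y) (z / c)
          + deriv (deriv (deriv y)) (z / c)) := by
    intro z
    have H : HasDerivAt (fun w =>
          k / c * (2 * y (w / c) * deriv y (w / c) + deriv (deriv y) (w / c)))
        (k / c ^ 2 * (2 * (deriv y (z / c)) ^ 2 + 2 * y (z / c) * deriv (deriv y) (z / c)
          + deriv (deriv (deriv y)) (z / c))) z := by
      have := ((((hY z).const_mul 2).mul (hY1 z)).add (hY2 z)).const_mul (k / c)
      refine this.congr_deriv ?_
      field_simp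
    exact H.deriv
  -- third x derivative
  have D3 : ∀ z : ℝ, deriv (fun w =>
        k / c ^ 2 * (2 * (deriv y (w / c)) ^ 2 + 2 * y (w / c) * deriv (deriv y) (w / c)
          + deriv (deriv (deriv y)) (w / c))) z
      = k / c ^ 3 * (6 * deriv y (z / c) * deriv (deriv y) (z / c)
          + 2 * y (z / c) * deriv (deriv (deriv y)) (z / c)
          + deriv (deriv (deriv (deriv y))) (z / c)) := by
    intro z
    have H : HasDerivAt (fun w =>
          k / c ^ 2 * (2 * (deriv y (w / c)) ^ 2 + 2 * y (w / c) * deriv (deriv y) (w / c)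
            + deriv (deriv (deriv y)) (w / c)))
        (k / c ^ 3 * (6 * deriv y (z / c) * deriv (deriv y) (z / c)
          + 2 * y (z / c) * deriv (deriv (deriv y)) (z / c)
          + deriv (deriv (deriv (deriv y))) (z / c))) z := by
      have := (((((hY1 z).pow 2).const_mul 2).add
          (((hY z).const_mul 2).mul (hY2 z))).add (hY3 z)).const_mul (k / c ^ 2)
      refine this.congr_deriv ?_
      push_cast
      field_simp
      ring
    exact H.deriv
  -- time derivative
  have hw : HasDerivAt (fun t' : ℝ => (3 * t') ^ ((1:ℝ)/3))
      ((3 * t) ^ ((1:ℝ)/3 - 1)) t := by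
    have h1 : HasDerivAt (fun t' : ℝ => 3 * t') 3 t := by
      simpa using (hasDerivAt_id' t).const_mul 3
    have h2 := (Real.hasDerivAt_rpow_const (x := 3 * t) (p := (1:ℝ)/3)
      (Or.inl (ne_of_gt h3t)))
    have h3 := h2.comp t h1
    refine h3.congr_deriv ?_
    ring
  have hkd : HasDerivAt (fun t' : ℝ => (3 * t') ^ (-(2:ℝ)/3))
      (-2 * (3 * t) ^ (-(2:ℝ)/3 - 1)) t := by
    have h1 : HasDerivAt (fun t' : ℝ => 3 * t') 3 t := by
      simpa using (hasDerivAt_id' t).const_mul 3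
    have h2 := (Real.hasDerivAt_rpow_const (x := 3 * t) (p := -(2:ℝ)/3)
      (Or.inl (ne_of_gt h3t)))
    have h3 := h2.comp t h1
    refine h3.congr_deriv ?_
    ring
  have hs : HasDerivAt (fun t' : ℝ => x / (3 * t') ^ ((1:ℝ)/3))
      (-(x * (3 * t) ^ ((1:ℝ)/3 - 1)) / c ^ 2) t := by
    have := (hasDerivAt_const t x).div hw (ne_of_gt hc)
    refine this.congr_deriv ?_
    rw [hc_def]; ring
  have hYt : HasDerivAt (fun t' : ℝ => y (x / (3 * t') ^ ((1:ℝ)/3)))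
      (deriv y (x / c) * (-(x * (3 * t) ^ ((1:ℝ)/3 - 1)) / c ^ 2)) t := by
    have h0 : x / (3 * t) ^ ((1:ℝ)/3) = x / c := by rw [hc_def]
    have := (hdy (x / c)).hasDerivAt.comp t (by rw [← h0] at *; exact hs)
    exact this
  have hY1t : HasDerivAt (fun t' : ℝ => deriv y (x / (3 * t') ^ ((1:ℝ)/3)))
      (deriv (deriv y) (x / c) * (-(x * (3 * t) ^ ((1:ℝ)/3 - 1)) / c ^ 2)) t := by
    have := (hdy1 (x / c)).hasDerivAt.comp t hs
    exact this
  have DT : deriv (fun t' : ℝ => (3 * t') ^ (-(2:ℝ)/3) *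
        ((y (x / (3 * t') ^ ((1:ℝ)/3))) ^ 2 + deriv y (x / (3 * t') ^ ((1:ℝ)/3)))) t
      = (-2 * (3 * t) ^ (-(2:ℝ)/3 - 1)) * ((y (x / c)) ^ 2 + deriv y (x / c))
        + k * ((2 * y (x / c) * deriv y (x / c) + deriv (deriv y) (x / c))
            * (-(x * (3 * t) ^ ((1:ℝ)/3 - 1)) / c ^ 2)) := by
    have H : HasDerivAt (fun t' : ℝ => (3 * t') ^ (-(2:ℝ)/3) *
          ((y (x / (3 * t') ^ ((1:ℝ)/3))) ^ 2 + deriv y (x / (3 * t') ^ ((1:ℝ)/3))))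
        ((-2 * (3 * t) ^ (-(2:ℝ)/3 - 1)) * ((y (x / c)) ^ 2 + deriv y (x / c))
          + k * ((2 * y (x / c) * deriv y (x / c) + deriv (deriv y) (x / c))
              * (-(x * (3 * t) ^ ((1:ℝ)/3 - 1)) / c ^ 2))) t := by
      have := hkd.mul ((hYt.pow 2).add hY1t)
      refine this.congr_deriv ?_
      simp only [Pi.pow_apply, Pi.add_apply]
      rw [hk_def, hc_def]
      push_cast; ring
    exact H.deriv
  -- rewrite the goal
  rw [DT]
  simp only [D1]
  simp only [D2]
  simp only [D3]
  simp only [hy3, hy4]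
  -- power conversions
  have key : ∀ n : ℕ, (3 * t) ^ (-(n:ℝ)/3) = (c ^ n)⁻¹ := by
    intro n
    have h1 : c ^ n = (3 * t) ^ ((n:ℝ)/3) := by
      rw [hc_def, ← Real.rpow_natCast ((3 * t) ^ ((1:ℝ)/3)) n, ← Real.rpow_mul h3t.le]
      ring_nf
    rw [h1, ← Real.rpow_neg h3t.le]
    ring_nf
  have e1 : k = (c ^ 2)⁻¹ := by
    rw [hk_def, show (-(2:ℝ)/3) = (-(2:ℕ):ℝ)/3 by norm_num]
    simpa using key 2
  have e2 : (3 * t) ^ (-(2:ℝ)/3 - 1) = (c ^ 5)⁻¹ := by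
    rw [show (-(2:ℝ)/3 - 1) = (-(5:ℕ):ℝ)/3 by norm_num]
    simpa using key 5
  have e3 : (3 * t) ^ ((1:ℝ)/3 - 1) = (c ^ 2)⁻¹ := by
    rw [show ((1:ℝ)/3 - 1) = (-(2:ℕ):ℝ)/3 by norm_num]
    simpa using key 2
  rw [e1, e2, e3]
  field_simp
  ring
end
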